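/- In the fully connected conflict graph, every vertex (k,i,j) has degree exactly |R|(|R|−1) − 1 + (|K|−1)(4|R|−6), provided |R| ≥ 2. -/

import Mathlib

/-- The conflict graph on trip combinations `(k, i, j)` with `i ≠ j`:
two distinct trips are adjacent iff they share the vehicle or share a rider. -/
def conflictGraph (K R : Type*) :
    SimpleGraph {p : K × R × R // p.2.1 ≠ p.2.2} where
  Adj v w := v ≠ w ∧ (v.1.1 = w.1.1 ∨ v.1.2.1 = w.1.2.1 ∨ v.1.2.1 = w.1.2.2 ∨
      v.1.2.2 = w.1.2.1 ∨ v.1.2.2 = w.1.2.2)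
  symm := by
    constructor
    rintro v w ⟨hne, hc⟩
    refine ⟨hne.symm, ?_⟩
    rcases hc with h | h | h | h | h
    · exact Or.inl h.symm
    · exact Or.inr (Or.inl h.symm)
    · exact Or.inr (Or.inr (Or.inr (Or.inl h.symm)))
    · exact Or.inr (Or.inr (Or.inl h.symm))
    · exact Or.inr (Or.inr (Or.inr (Or.inr h.symm)))
  loopless := by constructor; intro v h; exact h.1 rfl

/-!
The neighbours of `(k, i, j)` split by vehicle; let `n = |R|`. On vehicle `k` they are all
`n (n - 1)` ordered pairs of distinct riders except `(i, j)` itself. On any other vehicle they are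
the pairs meeting `{i, j}`: the complement consists of the `(n - 2)(n - 3)` pairs of distinct
riders avoiding `i` and `j`, leaving `4 n - 6`.
-/

open Finset

section SharesRider

variable {R : Type*}

def SharesRider (p q : R × R) : Prop :=
  p.1 = q.1 ∨ p.1 = q.2 ∨ p.2 = q.1 ∨ p.2 = q.2

instance [DecidableEq R] (p q : R × R) : Decidable (SharesRider p q) := by
  unfold SharesRider; infer_instance

variable [Fintype R]

theorem card_offDiag_univ :
    #(univ : Finset R).offDiag = Fintype.card R * (Fintype.card R - 1) := by
  rw [offDiag_card, card_univ, Nat.mul_sub_one]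

variable [DecidableEq R]

theorem filter_not_sharesRider_offDiag (i j : R) :
    {q ∈ (univ : Finset R).offDiag | ¬SharesRider (i, j) q} = ({i, j}ᶜ : Finset R).offDiag := by
  ext ⟨a, b⟩
  rw [mem_filter]
  simp only [SharesRider, mem_offDiag, mem_compl, mem_insert, mem_singleton, mem_univ, true_and]
  tauto

theorem card_filter_sharesRider_offDiag {i j : R} (hij : i ≠ j) :
    #{q ∈ (univ : Finset R).offDiag | SharesRider (i, j) q} = 4 * Fintype.card R - 6 := by
  have hsplit := card_filter_add_card_filter_not (s := (univ : Finset R).offDiag)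
    (fun q ↦ SharesRider (i, j) q)
  rw [filter_not_sharesRider_offDiag, offDiag_card, offDiag_card, card_compl, card_pair hij,
    card_univ] at hsplit
  obtain ⟨m, hm⟩ : ∃ m, Fintype.card R = m + 2 :=
    ⟨Fintype.card R - 2, by have := Fintype.one_lt_card_iff.mpr ⟨i, j, hij⟩; omega⟩
  rw [hm, Nat.add_sub_cancel] at hsplit
  rw [hm]
  have hsq : (m + 2) * (m + 2) = m * m + 4 * m + 4 := by ring
  have := Nat.le_mul_self m
  omega

end SharesRider

theorem image_val_neighborSet_conflictGraph {K R : Type*} [Fintype K] [DecidableEq K]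
    [Fintype R] [DecidableEq R] (v : {p : K × R × R // p.2.1 ≠ p.2.2}) :
    Subtype.val '' (conflictGraph K R).neighborSet v =
      ↑(({v.1.1} ×ˢ (univ : Finset R).offDiag).erase v.1 ∪
        (univ.erase v.1.1) ×ˢ {q ∈ (univ : Finset R).offDiag | SharesRider v.1.2 q}) := by
  obtain ⟨⟨k, i, j⟩, hij⟩ := v
  ext ⟨k', a, b⟩
  simp only [ne_eq, conflictGraph, Set.mem_image, SimpleGraph.mem_neighborSet, Subtype.exists,
    Subtype.mk.injEq, exists_and_left, exists_prop, exists_eq_right_right, Prod.mk.injEq, not_and,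
    singleton_product, coe_union, coe_erase, coe_map, Function.Embedding.coeFn_mk, coe_offDiag,
    coe_univ, Set.offDiag_univ, coe_product, coe_filter, mem_offDiag, mem_univ, true_and,
    Set.mem_union, Set.mem_sdiff, Set.mem_compl_iff, Set.mem_diagonal_iff, Set.mem_singleton_iff,
    Set.mem_prod, Set.mem_univ, Set.mem_ofPred_eq]
  unfold SharesRider
  rcases eq_or_ne k' k with rfl | hk
  · tauto
  · simp only [hk, Ne.symm hk, false_or, false_implies, true_and, not_false_eq_true]
    tauto

theorem conflictGraph_degree_general (K R : Type*) [Fintype K] [Fintype R]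
    (v : {p : K × R × R // p.2.1 ≠ p.2.2}) :
    ((conflictGraph K R).neighborSet v).ncard =
      Fintype.card R * (Fintype.card R - 1) - 1 +
        (Fintype.card K - 1) * (4 * Fintype.card R - 6) := by
  classical
  have hv : v.1 ∈ {v.1.1} ×ˢ (univ : Finset R).offDiag := by
    simpa [mem_offDiag] using v.2
  have hdisj : Disjoint (({v.1.1} ×ˢ (univ : Finset R).offDiag).erase v.1)
      ((univ.erase v.1.1) ×ˢ {q ∈ (univ : Finset R).offDiag | SharesRider v.1.2 q}) :=
    (disjoint_product.mpr (Or.inl (disjoint_singleton_left.mpr (notMem_erase _ _)))).mono_left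
      (erase_subset _ _)
  rw [← Set.ncard_image_of_injective _ Subtype.val_injective,
    image_val_neighborSet_conflictGraph, Set.ncard_coe_finset,
    card_union_of_disjoint hdisj, card_erase_of_mem hv, card_product, card_product, card_singleton, one_mul,
    card_erase_of_mem (mem_univ _), card_univ, card_offDiag_univ,
    card_filter_sharesRider_offDiag v.2]

theorem conflictGraph_degree (K R : Type*) [Fintype K] [Fintype R]
    (hK : 1 ≤ Fintype.card K) (hR : 2 ≤ Fintype.card R)
    (v : {p : K × R × R // p.2.1 ≠ p.2.2}) :
    ((conflictGraph K R).neighborSet v).ncard =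
      Fintype.card R * (Fintype.card R - 1) - 1 +
        (Fintype.card K - 1) * (4 * Fintype.card R - 6) :=
  conflictGraph_degree_general K R v
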